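/- arXiv:2004.11190 — 2 statements merged into one kernel-verified Lean document; each statement's English description precedes it below -/
import Mathlib

section
/- Let (Ω, F, P) be a probability space, u > 0, and for each ω let T(ω) : ℕ → ℝ and R(ω) : ℝ → ℝ be such that almost surely: T(ω)(0) = 0, T(ω) is strictly increasing with T(ω)(n) → ∞, R(ω)(0) = u, for every k ≥ 1 the function R(ω) is monotone (nondecreasing or nonincreasing) on [T(ω)(k−1), T(ω)(k)), and R(ω)(T(ω)(k)) ≤ limsup_{t → T(ω)(k)⁻} R(ω)(t). Assume the maps U_k(ω) := R(ω)(T(ω)(k)) are measurable, U_0 = u, and the random variables Y_k := U_{k−1} − U_k (k ≥ 1) are mutually independent. Then the ruin event {ω : ∃ t ≥ 0, R(ω)(t) < 0} coincides almost surely with the event {sup_{k≥1} S_k > u} where S_k = Y_1 + ⋯ + Y_k, and for every h ≥ 0 its probability is at most e^{−hu} · sup_{k≥1} ∏_{j=1}^{k} E[e^{h Y_j}]. -/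
/-!
On each interval `[T k, T (k + 1))` the path is monotone, and at `T (k + 1)` it lies below its
left limsup; hence every value on the interval is at least `R (T k)` or at least
`R (T (k + 1))`, and the path goes negative exactly when some `U (k + 1) = u - S (k + 1)` does.
The bound is Ville's maximal inequality for the nonnegative mean-one martingale
`∏_{j ≤ k} e^{h Y_j} / E[e^{h Y_j}]`, proved by splitting the crossing event according to the
first crossing time.
-/

open MeasureTheory ProbabilityTheory Filter Finset
open scoped ENNReal Topology

lemma exists_mem_Ico_of_tendsto_atTop {α : Type*} [LinearOrder α] [NoMaxOrder α] {T : ℕ → α}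
    (hT : Tendsto T atTop atTop) {t : α} (ht : T 0 ≤ t) :
    ∃ k, t ∈ Set.Ico (T k) (T (k + 1)) := by
  classical
  have hex : ∃ n, t < T n := (hT.eventually_gt_atTop t).exists
  obtain ⟨k, hk⟩ : ∃ k, Nat.find hex = k + 1 :=
    Nat.exists_eq_succ_of_ne_zero fun h0 => (Nat.find_spec hex).not_ge (h0 ▸ ht)
  exact ⟨k, not_lt.1 (Nat.find_min hex (by omega)), hk ▸ Nat.find_spec hex⟩

lemma AntitoneOn.le_of_le_limsup_nhdsLT {α : Type*} [LinearOrder α] [TopologicalSpace α]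
    [ClosedIicTopology α] {f : α → ℝ} {a b t : α} (hf : AntitoneOn f (Set.Ico a b))
    (ht : t ∈ Set.Ico a b) (hb : (f b : EReal) ≤ limsup (fun s => (f s : EReal)) (𝓝[<] b)) :
    f b ≤ f t := by
  have hev : ∀ᶠ s in 𝓝[<] b, (f s : EReal) ≤ f t := by
    filter_upwards [Ioo_mem_nhdsLT ht.2] with s hs
    exact_mod_cast hf ht ⟨ht.1.trans hs.1.le, hs.2⟩ hs.1.le
  exact_mod_cast hb.trans (limsup_le_of_le (by isBoundedDefault) hev)

theorem exists_neg_iff_exists_neg_at_jumps {u : ℝ} (hu : 0 ≤ u) {T : ℕ → ℝ} {R : ℝ → ℝ}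
    (hT0 : T 0 = 0) (hTm : StrictMono T) (hTt : Tendsto T atTop atTop) (hR0 : R 0 = u)
    (hmono : ∀ k, MonotoneOn R (Set.Ico (T k) (T (k + 1))) ∨
      AntitoneOn R (Set.Ico (T k) (T (k + 1))))
    (hjump : ∀ k, (R (T (k + 1)) : EReal) ≤
      limsup (fun t => (R t : EReal)) (𝓝[<] (T (k + 1)))) :
    (∃ t, 0 ≤ t ∧ R t < 0) ↔ ∃ k, R (T (k + 1)) < 0 := by
  constructor
  · rintro ⟨t, ht0, hRt⟩
    obtain ⟨k, hk⟩ := exists_mem_Ico_of_tendsto_atTop hTt (hT0 ▸ ht0)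
    rcases hmono k with hm | hm
    · have hle : R (T k) ≤ R t := hm ⟨le_rfl, hTm k.lt_succ_self⟩ hk hk.1
      cases k with
      | zero => rw [hT0, hR0] at hle; linarith
      | succ m => exact ⟨m, hle.trans_lt hRt⟩
    · exact ⟨k, (hm.le_of_le_limsup_nhdsLT hk (hjump k)).trans_lt hRt⟩
  · rintro ⟨k, hk⟩
    exact ⟨T (k + 1), hT0 ▸ (hTm k.succ_pos).le, hk⟩

section Ville

variable {Ω : Type*} [MeasurableSpace Ω] {P : Measure Ω} {X : ℕ → Ω → ℝ≥0∞}

lemma lintegral_mul_eq_of_measurable_natural (hX : ∀ i, StronglyMeasurable (X i))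
    (hindep : iIndepFun X P) {n m : ℕ} (hnm : n < m) {g : Ω → ℝ≥0∞}
    (hg : Measurable[Filtration.natural X hX n] g) :
    ∫⁻ ω, g ω * X m ω ∂P = (∫⁻ ω, g ω ∂P) * ∫⁻ ω, X m ω ∂P := by
  have hind : Indep (Filtration.natural X hX n) (MeasurableSpace.comap (X m) inferInstance) P := by
    have := indep_iSup_of_disjoint (fun i => (hX i).measurable.comap_le) hindep.iIndep
      (S := {i | i ≤ n}) (T := {m}) (by simpa using hnm)
    rwa [_root_.iSup_singleton] at this
  exact lintegral_mul_eq_lintegral_mul_lintegral_of_independent_measurableSpace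
    (Filtration.le _ n) (hX m).measurable.comap_le hind hg (comap_measurable (X m))

lemma measurable_natural_prod_range (hX : ∀ i, StronglyMeasurable (X i)) (n : ℕ) :
    Measurable[Filtration.natural X hX n] fun ω => ∏ i ∈ range (n + 1), X i ω :=
  Finset.measurable_prod _ fun i hi =>
    ((Filtration.stronglyAdapted_natural hX i).measurable).mono
      (Filtration.mono _ (Nat.lt_succ_iff.1 (Finset.mem_range.1 hi))) le_rfl

/-- The partial products of independent mean-one factors form a martingale. -/
lemma setLIntegral_prod_range_eq (hX : ∀ i, StronglyMeasurable (X i)) (hindep : iIndepFun X P)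
    (hmean : ∀ i, ∫⁻ ω, X i ω ∂P = 1) {j : ℕ} {A : Set Ω}
    (hA : MeasurableSet[Filtration.natural X hX j] A) {N : ℕ} (hjN : j ≤ N) :
    ∫⁻ ω in A, ∏ i ∈ range (N + 1), X i ω ∂P = ∫⁻ ω in A, ∏ i ∈ range (j + 1), X i ω ∂P := by
  induction N, hjN using Nat.le_induction with
  | base => rfl
  | succ N hjN ih =>
    have hA' : MeasurableSet A := Filtration.le _ j A hA
    have hg : Measurable[Filtration.natural X hX N]
        (A.indicator fun ω => ∏ i ∈ range (N + 1), X i ω) :=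
      (measurable_natural_prod_range hX N).indicator (Filtration.mono _ hjN A hA)
    calc ∫⁻ ω in A, ∏ i ∈ range (N + 1 + 1), X i ω ∂P
        = ∫⁻ ω, (A.indicator (fun ω => ∏ i ∈ range (N + 1), X i ω) ω) * X (N + 1) ω ∂P := by
          rw [← lintegral_indicator hA']
          simp only [Finset.prod_range_succ _ (N + 1), Set.indicator_mul_left]
      _ = ∫⁻ ω in A, ∏ i ∈ range (j + 1), X i ω ∂P := by
          rw [lintegral_mul_eq_of_measurable_natural hX hindep N.lt_succ_self hg, hmean, mul_one,
            lintegral_indicator hA', ih]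

/-- Ville's maximal inequality for the product martingale. -/
theorem mul_measure_iUnion_le_prod_range_le_one (hX : ∀ i, StronglyMeasurable (X i))
    (hindep : iIndepFun X P) (hmean : ∀ i, ∫⁻ ω, X i ω ∂P = 1) (c : ℝ≥0∞) :
    c * P (⋃ n, {ω | c ≤ ∏ i ∈ range (n + 1), X i ω}) ≤ 1 := by
  set B : ℕ → Set Ω := fun n => {ω | c ≤ ∏ i ∈ range (n + 1), X i ω}
  have hB : ∀ n, MeasurableSet[Filtration.natural X hX n] (B n) := fun n =>
    measurableSet_le measurable_const (measurable_natural_prod_range hX n)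
  have hA : ∀ n, MeasurableSet[Filtration.natural X hX n] (disjointed B n) := fun n => by
    rw [disjointed_eq_inter_compl]
    exact (hB n).inter (MeasurableSet.iInter fun i => MeasurableSet.iInter fun hi =>
      (Filtration.mono _ (le_of_lt hi) _ (hB i)).compl)
  have hA' : ∀ n, MeasurableSet (disjointed B n) := fun n => Filtration.le _ n _ (hA n)
  have hpiece : ∀ N j, j < N → c * P (disjointed B j) ≤
      ∫⁻ ω in disjointed B j, ∏ i ∈ range (N + 1), X i ω ∂P := by
    intro N j hjN
    rw [setLIntegral_prod_range_eq hX hindep hmean (hA j) hjN.le, ← setLIntegral_const]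
    exact setLIntegral_mono' (hA' j) fun ω hω => disjointed_subset B j hω
  calc c * P (⋃ n, B n) = c * P (⋃ n, disjointed B n) := by rw [iUnion_disjointed]
    _ ≤ c * ∑' n, P (disjointed B n) := by gcongr; exact measure_iUnion_le _
    _ = ∑' n, c * P (disjointed B n) := ENNReal.tsum_mul_left.symm
    _ ≤ 1 := ENNReal.tsum_le_of_sum_range_le fun N => calc
      ∑ j ∈ range N, c * P (disjointed B j)
          ≤ ∑ j ∈ range N, ∫⁻ ω in disjointed B j, ∏ i ∈ range (N + 1), X i ω ∂P :=
        Finset.sum_le_sum fun j hj => hpiece N j (Finset.mem_range.1 hj)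
      _ = ∫⁻ ω in ⋃ j ∈ range N, disjointed B j, ∏ i ∈ range (N + 1), X i ω ∂P :=
        (lintegral_biUnion_finset (fun i _ j _ hij => disjoint_disjointed B hij)
          (fun j _ => hA' j) _).symm
      _ ≤ ∫⁻ ω, ∏ i ∈ range (N + 1), X i ω ∂P := setLIntegral_le_lintegral _ _
      _ = 1 := by
        rw [lintegral_prod_eq_prod_lintegral_of_indepFun _ _ hindep fun i => (hX i).measurable]
        simp [hmean]

end Ville

lemma ofReal_exp_mul_sum {ι : Type*} (s : Finset ι) (h : ℝ) (Y : ι → ℝ) :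
    ENNReal.ofReal (Real.exp (h * ∑ j ∈ s, Y j)) = ∏ j ∈ s, ENNReal.ofReal (Real.exp (h * Y j)) := by
  rw [Finset.mul_sum, Real.exp_sum, ENNReal.ofReal_prod_of_nonneg fun j _ => (Real.exp_pos _).le]

lemma ENNReal.div_le_prod_mul_inv {ι : Type*} {s : Finset ι} {a f : ι → ℝ≥0∞}
    (ha0 : ∀ j, a j ≠ 0) (haTop : ∀ j, a j ≠ ∞) {x C : ℝ≥0∞} (hC0 : C ≠ 0) (hC : C ≠ ∞)
    (hprod : ∏ j ∈ s, a j ≤ C) (hx : x ≤ ∏ j ∈ s, f j) :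
    x / C ≤ ∏ j ∈ s, f j * (a j)⁻¹ := by
  rw [← ENNReal.mul_le_mul_iff_left (Finset.prod_ne_zero_iff.2 fun j _ => ha0 j)
    (ENNReal.prod_ne_top fun j _ => haTop j)]
  calc x / C * ∏ j ∈ s, a j ≤ x / C * C := by gcongr
    _ = x := ENNReal.div_mul_cancel hC0 hC
    _ ≤ ∏ j ∈ s, f j := hx
    _ = (∏ j ∈ s, f j * (a j)⁻¹) * ∏ j ∈ s, a j := by
      rw [← Finset.prod_mul_distrib]
      refine Finset.prod_congr rfl fun j _ => ?_
      rw [mul_assoc, ENNReal.inv_mul_cancel (ha0 j) (haTop j), mul_one]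

theorem measure_iUnion_lt_sum_range_le {Ω : Type*} [MeasurableSpace Ω] {P : Measure Ω}
    {Y : ℕ → Ω → ℝ} (hY : ∀ j, Measurable (Y j)) (hindep : iIndepFun Y P) (u : ℝ) {h : ℝ}
    (hh : 0 ≤ h) :
    P (⋃ k, {ω | u < ∑ j ∈ range (k + 1), Y j ω}) ≤
      ENNReal.ofReal (Real.exp (-h * u)) *
        ⨆ k, ∏ j ∈ range (k + 1), ∫⁻ ω, ENNReal.ofReal (Real.exp (h * Y j ω)) ∂P := by
  have := hindep.isProbabilityMeasure
  set a : ℕ → ℝ≥0∞ := fun j => ∫⁻ ω, ENNReal.ofReal (Real.exp (h * Y j ω)) ∂P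
  set C : ℝ≥0∞ := ⨆ k, ∏ j ∈ range (k + 1), a j
  have hexp : ∀ x, ENNReal.ofReal (Real.exp x) ≠ 0 := fun x => by positivity
  have hmeas : ∀ j, Measurable fun ω => ENNReal.ofReal (Real.exp (h * Y j ω)) := fun j => by
    fun_prop
  by_cases hC : C = ∞
  · rw [hC, ENNReal.mul_top (hexp _)]
    exact le_top
  have hprod_le : ∀ k, ∏ j ∈ range (k + 1), a j ≤ C := le_iSup (fun k => ∏ j ∈ range (k + 1), a j)
  have ha0 : ∀ j, a j ≠ 0 := fun j hj => by
    obtain ⟨ω, hω⟩ := ((lintegral_eq_zero_iff (hmeas j)).1 hj).exists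
    exact hexp _ hω
  have haTop : ∀ j, a j ≠ ∞ := fun j hj => hC <| top_le_iff.1 <| (hprod_le j).trans' <|
    (WithTop.prod_eq_top (Finset.self_mem_range_succ j) hj fun i _ => ha0 i).ge
  have hC0 : C ≠ 0 := fun h0 => ha0 0 (by simpa [h0] using hprod_le 0)
  set X : ℕ → Ω → ℝ≥0∞ := fun j ω => ENNReal.ofReal (Real.exp (h * Y j ω)) * (a j)⁻¹
  have hX : ∀ j, StronglyMeasurable (X j) := fun j => ((hmeas j).mul_const _).stronglyMeasurable
  have hXindep : iIndepFun X P :=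
    hindep.comp (fun j y => ENNReal.ofReal (Real.exp (h * y)) * (a j)⁻¹) fun j => by fun_prop
  have hXmean : ∀ j, ∫⁻ ω, X j ω ∂P = 1 := fun j => by
    rw [lintegral_mul_const _ (hmeas j)]
    exact ENNReal.mul_inv_cancel (ha0 j) (haTop j)
  set c := ENNReal.ofReal (Real.exp (h * u)) / C
  have hsub : ⋃ k, {ω | u < ∑ j ∈ range (k + 1), Y j ω} ⊆
      ⋃ k, {ω | c ≤ ∏ j ∈ range (k + 1), X j ω} := by
    refine Set.iUnion_mono fun k ω (hk : u < _) =>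
      ENNReal.div_le_prod_mul_inv ha0 haTop hC0 hC (hprod_le k) ?_
    rw [← ofReal_exp_mul_sum]
    gcongr
  calc P (⋃ k, {ω | u < ∑ j ∈ range (k + 1), Y j ω})
      ≤ P (⋃ k, {ω | c ≤ ∏ j ∈ range (k + 1), X j ω}) := measure_mono hsub
    _ ≤ c⁻¹ := ENNReal.le_inv_iff_mul_le.2 <| by
      rw [mul_comm]; exact mul_measure_iUnion_le_prod_range_le_one hX hXindep hXmean c
    _ = ENNReal.ofReal (Real.exp (-h * u)) * C := by
      rw [ENNReal.inv_div (Or.inl hC) (Or.inr (hexp _)), ENNReal.div_eq_inv_mul,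
        ← ENNReal.ofReal_inv_of_pos (Real.exp_pos _), ← Real.exp_neg, neg_mul]

theorem stmt7_general {Ω : Type*} [MeasurableSpace Ω] (P : Measure Ω)
    (u : ℝ) (hu : 0 < u)
    (T : Ω → ℕ → ℝ) (R : Ω → ℝ → ℝ)
    (hae : ∀ᵐ ω ∂P,
      T ω 0 = 0 ∧ StrictMono (T ω) ∧ Tendsto (T ω) atTop atTop ∧
      R ω 0 = u ∧
      (∀ k : ℕ, MonotoneOn (R ω) (Set.Ico (T ω k) (T ω (k + 1))) ∨
        AntitoneOn (R ω) (Set.Ico (T ω k) (T ω (k + 1)))) ∧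
      (∀ k : ℕ, (R ω (T ω (k + 1)) : EReal) ≤
        Filter.limsup (fun t => (R ω t : EReal))
          (nhdsWithin (T ω (k + 1)) (Set.Iio (T ω (k + 1))))))
    (U : ℕ → Ω → ℝ) (hU : ∀ k ω, U k ω = R ω (T ω k))
    (hUmeas : ∀ k, Measurable (U k))
    (hU0 : ∀ᵐ ω ∂P, U 0 ω = u)
    (Y : ℕ → Ω → ℝ) (hY : ∀ k ω, Y k ω = U k ω - U (k + 1) ω)
    (hindep : iIndepFun Y P)
    (S : ℕ → Ω → ℝ) (hS : ∀ k ω, S k ω = ∑ j ∈ Finset.range k, Y j ω) :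
    {ω | ∃ t : ℝ, 0 ≤ t ∧ R ω t < 0} =ᵐ[P] (⋃ k : ℕ, {ω | u < S (k + 1) ω}) ∧
    ∀ h : ℝ, 0 ≤ h →
      P {ω | ∃ t : ℝ, 0 ≤ t ∧ R ω t < 0} ≤
        ENNReal.ofReal (Real.exp (-h * u)) *
          ⨆ k : ℕ, ∏ j ∈ Finset.range (k + 1),
            ∫⁻ ω, ENNReal.ofReal (Real.exp (h * Y j ω)) ∂P := by
  obtain rfl : S = fun k ω => ∑ j ∈ range k, Y j ω := funext fun k => funext (hS k)
  have hruin : {ω | ∃ t : ℝ, 0 ≤ t ∧ R ω t < 0} =ᵐ[P]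
      ⋃ k : ℕ, {ω | u < ∑ j ∈ range (k + 1), Y j ω} := by
    refine eventuallyEq_set.2 ?_
    filter_upwards [hae, hU0] with ω ⟨hT0, hTm, hTt, hR0, hmono, hjump⟩ hU0ω
    have hsum : ∀ k, ∑ j ∈ range (k + 1), Y j ω = u - R ω (T ω (k + 1)) := fun k => by
      simp only [hY, Finset.sum_range_sub', hU0ω, hU (k + 1) ω]
    simp only [Set.mem_ofPred_eq, Set.mem_iUnion, hsum,
      exists_neg_iff_exists_neg_at_jumps hu.le hT0 hTm hTt hR0 hmono hjump]
    exact exists_congr fun k => by constructor <;> intro <;> linarith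
  refine ⟨hruin, fun h hh => ?_⟩
  rw [measure_congr hruin]
  refine measure_iUnion_lt_sum_range_le (fun j => ?_) hindep u hh
  rw [funext (hY j)]
  exact (hUmeas j).sub (hUmeas (j + 1))

/-- Theorem 1 for the general risk reserve process.
Almost surely the path `R ω` starts at `u`, is monotone between the successive
jump times `T ω k` (with `T ω 0 = 0`, strictly increasing, tending to `∞`) and
may jump down only at those times (`R ω (T ω (k+1)) ≤ limsup_{t → T ω (k+1)⁻} R ω t`,
limsup in the extended reals).  With `U k ω = R ω (T ω k)` measurable, `U 0 = u`
a.s., and the increments `Y k = U k − U (k+1)` (representing `Y_{k+1} = U_k − U_{k+1}`)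
mutually independent, the ruin event `{∃ t ≥ 0, R ω t < 0}` coincides a.s. with
`{sup_{k≥1} S_k > u}` where `S k = ∑_{j<k} Y j`, and for every `h ≥ 0` its
probability is at most `e^{-h u} · sup_{k≥1} ∏_{j=1}^k E[e^{h Y_j}]`. -/
theorem stmt7 {Ω : Type*} [MeasurableSpace Ω] (P : Measure Ω) [IsProbabilityMeasure P]
    (u : ℝ) (hu : 0 < u)
    (T : Ω → ℕ → ℝ) (R : Ω → ℝ → ℝ)
    (hae : ∀ᵐ ω ∂P,
      T ω 0 = 0 ∧ StrictMono (T ω) ∧ Tendsto (T ω) atTop atTop ∧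
      R ω 0 = u ∧
      (∀ k : ℕ, MonotoneOn (R ω) (Set.Ico (T ω k) (T ω (k + 1))) ∨
        AntitoneOn (R ω) (Set.Ico (T ω k) (T ω (k + 1)))) ∧
      (∀ k : ℕ, (R ω (T ω (k + 1)) : EReal) ≤
        Filter.limsup (fun t => (R ω t : EReal))
          (nhdsWithin (T ω (k + 1)) (Set.Iio (T ω (k + 1))))))
    (U : ℕ → Ω → ℝ) (hU : ∀ k ω, U k ω = R ω (T ω k))
    (hUmeas : ∀ k, Measurable (U k))
    (hU0 : ∀ᵐ ω ∂P, U 0 ω = u)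
    (Y : ℕ → Ω → ℝ) (hY : ∀ k ω, Y k ω = U k ω - U (k + 1) ω)
    (hindep : iIndepFun Y P)
    (S : ℕ → Ω → ℝ) (hS : ∀ k ω, S k ω = ∑ j ∈ Finset.range k, Y j ω) :
    {ω | ∃ t : ℝ, 0 ≤ t ∧ R ω t < 0} =ᵐ[P] (⋃ k : ℕ, {ω | u < S (k + 1) ω}) ∧
    ∀ h : ℝ, 0 ≤ h →
      P {ω | ∃ t : ℝ, 0 ≤ t ∧ R ω t < 0} ≤
        ENNReal.ofReal (Real.exp (-h * u)) *
          ⨆ k : ℕ, ∏ j ∈ Finset.range (k + 1),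
            ∫⁻ ω, ENNReal.ofReal (Real.exp (h * Y j ω)) ∂P :=
  stmt7_general P u hu T R hae U hU hUmeas hU0 Y hY hindep S hS
end

section
/- Let Y_1^*, Y_2^*, … be mutually independent real-valued random variables, (r_k)_{k≥1} nonnegative reals, v_k = ∏_{j=1}^{k} 1/(1 + r_j) (v_0 = 1), and S_k^* = Σ_{j=1}^{k} v_{j−1} Y_j^*. Suppose there exist an integer l ≥ 1 and a real q_l > 0 such that for all n ≥ 1 the random variables Y_{n+l}^* and q_l Y_n^* are identically distributed, r_{n+l} = r_n for all n ≥ 1, and q_l v_l = 1. If h ≥ 0 satisfies E[e^{h S_l^*}] ≤ 1, then sup_{k≥1} E[e^{h S_k^*}] = max_{1≤k≤l} E[e^{h S_k^*}]. -/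
/-!
Since the `Y*_j` are independent, `E[e^{h S*_k}]` is the product over `j ≤ k` of the
factors `E[e^{h v_{j-1} Y*_j}]`. The periodicity of `r` makes `v` multiplicative along
periods, `v_{l+m} = v_l v_m`, so together with `Y*_{j+l} ~ q Y*_j` and `q v_l = 1` the
factors are `l`-periodic. Hence `E[e^{h S*_{n+l}}] = E[e^{h S*_l}] E[e^{h S*_n}] ≤ E[e^{h S*_n}]`,
and every `E[e^{h S*_k}]` is dominated by one with `1 ≤ k ≤ l`.
-/

open MeasureTheory ProbabilityTheory Finset
open scoped ENNReal

@[to_additive Finset.sum_Icc_one_eq_sum_range]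
lemma Finset.prod_Icc_one_eq_prod_range {M : Type*} [CommMonoid M] (f : ℕ → M) (n : ℕ) :
    ∏ j ∈ Icc 1 n, f j = ∏ j ∈ range n, f (j + 1) := by
  rw [← Ico_add_one_right_eq_Icc, prod_Ico_eq_prod_range]
  simp only [Nat.add_sub_cancel, add_comm 1]

lemma Function.Periodic.prod_range_add {M : Type*} [CommMonoid M] {f : ℕ → M} {l : ℕ}
    (hf : Function.Periodic f l) (n : ℕ) :
    ∏ j ∈ range (l + n), f j = (∏ j ∈ range l, f j) * ∏ j ∈ range n, f j := by
  rw [Finset.prod_range_add]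
  simp only [add_comm l]
  exact congrArg _ (prod_congr rfl fun j _ => hf j)

lemma lintegral_exp_sum_mul_eq_prod {Ω ι : Type*} [MeasurableSpace Ω] {μ : Measure Ω}
    {X : ι → Ω → ℝ} (hX : iIndepFun X μ) (hmeas : ∀ i, Measurable (X i)) (c : ι → ℝ)
    (s : Finset ι) :
    ∫⁻ ω, ENNReal.ofReal (Real.exp (∑ i ∈ s, c i * X i ω)) ∂μ
      = ∏ i ∈ s, ∫⁻ ω, ENNReal.ofReal (Real.exp (c i * X i ω)) ∂μ := by
  have hφ : Measurable fun x : ℝ => ENNReal.ofReal (Real.exp x) :=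
    ENNReal.measurable_ofReal.comp Real.measurable_exp
  rw [← lintegral_prod_eq_prod_lintegral_of_indepFun s
    (fun i ω => ENNReal.ofReal (Real.exp (c i * X i ω)))
    (hX.comp (fun i x => ENNReal.ofReal (Real.exp (c i * x)))
      fun i => hφ.comp (measurable_const_mul (c i)))
    fun i => hφ.comp ((hmeas i).const_mul (c i))]
  refine lintegral_congr fun ω => ?_
  rw [Real.exp_sum, ENNReal.ofReal_prod_of_nonneg fun i _ => (Real.exp_pos _).le]

lemma iSup_succ_eq_biSup_Icc_of_le_add {α : Type*} [CompleteLattice α] {Φ : ℕ → α} {l : ℕ}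
    (hl : 1 ≤ l) (hΦ : ∀ n, 1 ≤ n → Φ (n + l) ≤ Φ n) :
    ⨆ k : ℕ, Φ (k + 1) = ⨆ k ∈ Icc 1 l, Φ k := by
  have hbound : ∀ k, 1 ≤ k → Φ k ≤ ⨆ k ∈ Icc 1 l, Φ k := by
    intro k
    induction k using Nat.strong_induction_on with
    | _ k ih =>
      intro hk
      by_cases hkl : k ≤ l
      · exact le_iSup₂ (f := fun k _ => Φ k) k (mem_Icc.mpr ⟨hk, hkl⟩)
      · obtain ⟨n, rfl⟩ : ∃ n, k = n + l := ⟨k - l, by omega⟩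
        exact (hΦ n (by omega)).trans (ih n (by omega) (by omega))
  refine le_antisymm (iSup_le fun k => hbound (k + 1) k.succ_pos) (iSup₂_le fun k hk => ?_)
  obtain ⟨n, rfl⟩ : ∃ n, k = n + 1 := ⟨k - 1, by grind⟩
  exact le_iSup (fun k => Φ (k + 1)) n

theorem stmt13_general {Ω : Type*} [MeasurableSpace Ω] (P : Measure Ω) [IsProbabilityMeasure P]
    (Ystar : ℕ → Ω → ℝ)
    (hmeas : ∀ i, Measurable (Ystar i))
    (hindep : iIndepFun (fun k : ℕ => Ystar (k + 1)) P)
    (r : ℕ → ℝ)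
    (v : ℕ → ℝ) (hv : ∀ k, v k = ∏ j ∈ Finset.Icc 1 k, (1 + r j)⁻¹)
    (Sstar : ℕ → Ω → ℝ)
    (hSstar : ∀ k ω, Sstar k ω = ∑ j ∈ Finset.Icc 1 k, v (j - 1) * Ystar j ω)
    (l : ℕ) (hl : 1 ≤ l) (q : ℝ)
    (hper : ∀ n : ℕ, 1 ≤ n →
      Measure.map (Ystar (n + l)) P = Measure.map (fun ω => q * Ystar n ω) P)
    (hrper : ∀ n : ℕ, 1 ≤ n → r (n + l) = r n)
    (hqv : q * v l = 1)
    (h : ℝ)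
    (hSl : ∫⁻ ω, ENNReal.ofReal (Real.exp (h * Sstar l ω)) ∂P ≤ 1) :
    (⨆ k : ℕ, ∫⁻ ω, ENNReal.ofReal (Real.exp (h * Sstar (k + 1) ω)) ∂P) =
      ⨆ k ∈ Finset.Icc 1 l, ∫⁻ ω, ENNReal.ofReal (Real.exp (h * Sstar k ω)) ∂P := by
  set Φ : ℕ → ℝ≥0∞ := fun k => ∫⁻ ω, ENNReal.ofReal (Real.exp (h * Sstar k ω)) ∂P
  set I : ℕ → ℝ≥0∞ := fun j => ∫⁻ ω, ENNReal.ofReal (Real.exp (h * v j * Ystar (j + 1) ω)) ∂P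
  have hv_add (m : ℕ) : v (l + m) = v l * v m := by
    simp only [hv, prod_Icc_one_eq_prod_range]
    refine Function.Periodic.prod_range_add (fun j => ?_) m
    simp only [add_right_comm j l, hrper (j + 1) j.succ_pos]
  have hΦ (k : ℕ) : Φ k = ∏ j ∈ range k, I j := by
    rw [← lintegral_exp_sum_mul_eq_prod hindep (fun j => hmeas (j + 1))]
    refine lintegral_congr fun ω => ?_
    simp only [hSstar, sum_Icc_one_eq_sum_range, Nat.add_sub_cancel, mul_sum, mul_assoc]
  have hI : Function.Periodic I l := by
    intro j
    have hdist : IdentDistrib (Ystar (j + 1 + l)) (fun ω => q * Ystar (j + 1) ω) P P :=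
      ⟨(hmeas _).aemeasurable, ((hmeas _).const_mul q).aemeasurable, hper (j + 1) j.succ_pos⟩
    have hweight : h * v (j + l) * q = h * v j := by
      rw [add_comm j l, hv_add]
      linear_combination h * v j * hqv
    simp only [I, add_right_comm j l 1]
    refine ((hdist.comp (ENNReal.measurable_ofReal.comp
      (Real.measurable_exp.comp (measurable_const_mul (h * v (j + l)))))).lintegral_eq).trans
      (lintegral_congr fun ω => ?_)
    simp only [Function.comp_apply, ← mul_assoc, hweight]
  refine iSup_succ_eq_biSup_Icc_of_le_add (Φ := Φ) hl fun n _ => ?_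
  calc Φ (n + l) = Φ l * Φ n := by rw [hΦ, hΦ, hΦ, add_comm, hI.prod_range_add]
    _ ≤ Φ n := mul_le_of_le_one_left' hSl

/-- Theorem 3, periodic case `q_l v_l = 1`.
Random variables are 1-indexed (index `0` unused): `v k = ∏_{j=1}^{k} 1/(1+r_j)`
(so `v 0 = 1`) and `S*_k = ∑_{j=1}^{k} v_{j-1} Y*_j` (so `S*_0 = 0`).
Assume `l ≥ 1`, `q_l > 0`, `Y*_{n+l}` is distributed as `q_l Y*_n` and `r_{n+l} = r_n`
for all `n ≥ 1`, and `q_l v_l = 1`.  If `h ≥ 0` satisfies `E[e^{h S*_l}] ≤ 1`, then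
`sup_{k≥1} E[e^{h S*_k}] = max_{1 ≤ k ≤ l} E[e^{h S*_k}]`. -/
theorem stmt13 {Ω : Type*} [MeasurableSpace Ω] (P : Measure Ω) [IsProbabilityMeasure P]
    (Ystar : ℕ → Ω → ℝ)
    (hmeas : ∀ i, Measurable (Ystar i))
    (hindep : iIndepFun (fun k : ℕ => Ystar (k + 1)) P)
    (r : ℕ → ℝ) (hr : ∀ k : ℕ, 1 ≤ k → 0 ≤ r k)
    (v : ℕ → ℝ) (hv : ∀ k, v k = ∏ j ∈ Finset.Icc 1 k, (1 + r j)⁻¹)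
    (Sstar : ℕ → Ω → ℝ)
    (hSstar : ∀ k ω, Sstar k ω = ∑ j ∈ Finset.Icc 1 k, v (j - 1) * Ystar j ω)
    (l : ℕ) (hl : 1 ≤ l) (q : ℝ) (hq : 0 < q)
    (hper : ∀ n : ℕ, 1 ≤ n →
      Measure.map (Ystar (n + l)) P = Measure.map (fun ω => q * Ystar n ω) P)
    (hrper : ∀ n : ℕ, 1 ≤ n → r (n + l) = r n)
    (hqv : q * v l = 1)
    (h : ℝ) (hh : 0 ≤ h)
    (hSl : ∫⁻ ω, ENNReal.ofReal (Real.exp (h * Sstar l ω)) ∂P ≤ 1) :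
    (⨆ k : ℕ, ∫⁻ ω, ENNReal.ofReal (Real.exp (h * Sstar (k + 1) ω)) ∂P) =
      ⨆ k ∈ Finset.Icc 1 l, ∫⁻ ω, ENNReal.ofReal (Real.exp (h * Sstar k ω)) ∂P :=
  stmt13_general P Ystar hmeas hindep r v hv Sstar hSstar l hl q hper hrper hqv h hSl
end
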